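/- arXiv:2303.08703 — 3 statements merged into one kernel-verified Lean document; each statement's English description precedes it below -/
import Mathlib

section
/- Let t ∈ ℂ with Im t ≠ 0, and let p : ℝ → ℂ be continuous, 1-periodic, and not identically zero. Then Ψ(x) = e^{itx} p(x) is not square-integrable on all of ℝ: either ∫_0^∞ |Ψ|² = ∞ or ∫_{-∞}^0 |Ψ|² = ∞. -/
open Complex MeasureTheory Set

private lemma key_lemma (t : ℂ) (ht : t.im < 0) (p : ℝ → ℂ) (hp : Continuous p)
    (hper : ∀ x : ℝ, p (x + 1) = p x) (hne : ∃ x : ℝ, p x ≠ 0) :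
    ¬ IntegrableOn (fun x : ℝ => ‖Complex.exp (I * t * x) * p x‖ ^ 2) (Ioi 0) := by
  obtain ⟨x₀, hx₀⟩ := hne
  set s : ℝ := t.im with hs
  set f : ℝ → ℝ := fun x => ‖p x‖ ^ 2 with hf
  set g : ℝ → ℝ := fun x => Real.exp (-2 * s * x) * f x with hg
  have hFg : (fun x : ℝ => ‖Complex.exp (I * t * x) * p x‖ ^ 2) = g := by
    funext x
    simp only [hg, hf, norm_mul, mul_pow, Complex.norm_exp]
    congr 1
    rw [sq, ← Real.exp_add]
    congr 1
    simp [Complex.mul_re, Complex.mul_im]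
    ring
  have hfc : Continuous f := (continuous_norm.comp hp).pow 2
  have hgc : Continuous g := by
    exact ((Real.continuous_exp.comp (continuous_const.mul continuous_id))).mul hfc
  have hfper : Function.Periodic f 1 := fun x => by simp [hf, hper x]
  have hfnonneg : ∀ x, 0 ≤ f x := fun x => sq_nonneg _
  have hgnonneg : ∀ x, 0 ≤ g x := fun x => mul_nonneg (Real.exp_pos _).le (hfnonneg x)
  -- positivity of the period integral
  set c : ℝ := ∫ x in (x₀ - 2⁻¹)..(x₀ - 2⁻¹ + 1), f x with hc
  have hcpos : 0 < c := by
    rw [hc, intervalIntegral.integral_pos_iff_support_of_nonneg_ae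
      (Filter.Eventually.of_forall hfnonneg)
      (hfc.intervalIntegrable _ _)]
    refine ⟨by linarith, ?_⟩
    have hopen : IsOpen ({x | 0 < f x} ∩ Ioo (x₀ - 2⁻¹) (x₀ - 2⁻¹ + 1)) :=
      (isOpen_lt continuous_const hfc).inter isOpen_Ioo
    have hmem : x₀ ∈ {x | 0 < f x} ∩ Ioo (x₀ - 2⁻¹) (x₀ - 2⁻¹ + 1) := by
      constructor
      · exact pow_pos (norm_pos_iff.2 hx₀) 2
      · constructor <;> linarith
    have hsub : {x | 0 < f x} ∩ Ioo (x₀ - 2⁻¹) (x₀ - 2⁻¹ + 1) ⊆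
        Function.support f ∩ Ioc (x₀ - 2⁻¹) (x₀ - 2⁻¹ + 1) := by
      rintro x ⟨h1, h2⟩
      exact ⟨ne_of_gt h1, Ioo_subset_Ioc_self h2⟩
    calc (0:ENNReal) < volume ({x | 0 < f x} ∩ Ioo (x₀ - 2⁻¹) (x₀ - 2⁻¹ + 1)) :=
          hopen.measure_pos volume ⟨x₀, hmem⟩
      _ ≤ _ := measure_mono hsub
  -- integral of f over each unit interval equals c
  have hint : ∀ n : ℕ, ∫ x in Ioc (n:ℝ) (n+1), f x = c := by
    intro n
    have := hfper.intervalIntegral_add_eq (n:ℝ) (x₀ - 2⁻¹)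
    rw [← intervalIntegral.integral_of_le (by linarith : (n:ℝ) ≤ n + 1), this, hc]
  rw [hFg]
  intro hI
  set K : ℝ := ∫ x in Ioi (0:ℝ), g x with hK
  -- find n with exp(-2 s n) * c > K
  have htend : Filter.Tendsto (fun n : ℕ => Real.exp (-2 * s * n) * c) Filter.atTop Filter.atTop := by
    apply Filter.Tendsto.atTop_mul_const hcpos
    apply Real.tendsto_exp_atTop.comp
    apply Filter.Tendsto.const_mul_atTop (by linarith : (0:ℝ) < -2 * s)
    exact tendsto_natCast_atTop_atTop
  obtain ⟨n, hn⟩ := (htend.eventually_gt_atTop K).exists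
  have hmeas : MeasurableSet (Ioc (n:ℝ) (n+1)) := measurableSet_Ioc
  have hle1 : Real.exp (-2 * s * n) * c ≤ ∫ x in Ioc (n:ℝ) (n+1), g x := by
    have : Real.exp (-2 * s * n) * c = ∫ x in Ioc (n:ℝ) (n+1), Real.exp (-2 * s * n) * f x := by
      rw [MeasureTheory.integral_const_mul, hint n]
    rw [this]
    apply setIntegral_mono_on
    · exact (continuous_const.mul hfc).integrableOn_Ioc
    · exact hgc.integrableOn_Ioc
    · exact hmeas
    · intro x hx
      apply mul_le_mul_of_nonneg_right _ (hfnonneg x)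
      apply Real.exp_le_exp.2
      have := hx.1.le
      nlinarith
  have hle2 : (∫ x in Ioc (n:ℝ) (n+1), g x) ≤ K := by
    apply setIntegral_mono_set hI
    · exact Filter.Eventually.of_forall hgnonneg
    · apply HasSubset.Subset.eventuallyLE
      intro x hx
      have : (0:ℝ) ≤ n := n.cast_nonneg
      exact lt_of_lt_of_le (by linarith [hx.1] : (0:ℝ) < x) le_rfl
  linarith

theorem stmt_9 (t : ℂ) (ht : t.im ≠ 0) (p : ℝ → ℂ) (hp : Continuous p)
    (hper : ∀ x : ℝ, p (x + 1) = p x) (hne : ∃ x : ℝ, p x ≠ 0) :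
    ¬ IntegrableOn (fun x : ℝ => ‖Complex.exp (I * t * x) * p x‖ ^ 2) (Ioi 0) ∨
    ¬ IntegrableOn (fun x : ℝ => ‖Complex.exp (I * t * x) * p x‖ ^ 2) (Iio 0) := by
  rcases lt_or_gt_of_ne ht with h | h
  · exact Or.inl (key_lemma t h p hp hper hne)
  · right
    obtain ⟨x₀, hx₀⟩ := hne
    set q : ℝ → ℂ := fun x => p (-x) with hq
    have hqc : Continuous q := hp.comp continuous_neg
    have hqper : ∀ x : ℝ, q (x + 1) = q x := by
      intro x
      simp only [hq, neg_add]
      rw [show -x + -1 = (-x - 1) by ring, ← hper (-x - 1)]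
      ring_nf
    have hqne : ∃ x : ℝ, q x ≠ 0 := ⟨-x₀, by simpa [hq] using hx₀⟩
    have hkey := key_lemma (-t) (by simpa using h) q hqc hqper hqne
    intro hI
    apply hkey
    have := (Measure.measurePreserving_neg (volume : Measure ℝ)).integrableOn_comp_preimage
      (Homeomorph.neg ℝ).measurableEmbedding (s := Iio (0:ℝ))
      (f := fun x : ℝ => ‖Complex.exp (I * t * x) * p x‖ ^ 2)
    rw [← this] at hI
    simp only [Function.comp_def, neg_preimage, neg_Iio, neg_zero] at hI
    convert hI using 2 with x
    push_cast
    ring_nf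
    rfl
end

section
/- Let P : ℝ → Matrix (Fin m) (Fin m) ℂ be a matrix-valued function each of whose entries p_{ij} satisfies p_{ij}(-x) = conj(p_{ij}(x)). If Ψ : ℝ → ℂᵐ is n-times differentiable and satisfies iⁿ Ψ⁽ⁿ⁾(x) + P(x)·Ψ(x) = λ Ψ(x) for all x (the case with only the zeroth-order matrix coefficient), then Φ(x) = conj(Ψ(-x)) (entrywise conjugation) satisfies iⁿ Φ⁽ⁿ⁾(x) + P(x)·Φ(x) = conj(λ) Φ(x) for all x. -/
open Complex Matrix

noncomputable def conjCLM (m : ℕ) : (Fin m → ℂ) →L[ℝ] (Fin m → ℂ) :=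
  ContinuousLinearMap.pi fun i =>
    (Complex.conjCLE.toContinuousLinearMap).comp (ContinuousLinearMap.proj i)

lemma conjCLM_apply (m : ℕ) (v : Fin m → ℂ) (i : Fin m) :
    conjCLM m v i = (starRingEnd ℂ) (v i) := rfl

lemma iteratedDeriv_clm (m n : ℕ) (Ψ : ℝ → Fin m → ℂ) (hΨ : ContDiff ℝ n Ψ) (x : ℝ) :
    iteratedDeriv n (fun y => conjCLM m (Ψ y)) x = conjCLM m (iteratedDeriv n Ψ x) := by
  rw [iteratedDeriv_eq_iteratedFDeriv, iteratedDeriv_eq_iteratedFDeriv,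
    show (fun y => conjCLM m (Ψ y)) = (⇑(conjCLM m)) ∘ Ψ from rfl,
    (conjCLM m).iteratedFDeriv_comp_left (hΨ.contDiffAt (x := x)) le_rfl]
  rfl

theorem stmt_11 (m n : ℕ) (hm : 0 < m) (hn : 0 < n)
    (P : ℝ → Matrix (Fin m) (Fin m) ℂ)
    (hPT : ∀ x : ℝ, P (-x) = (P x).map (starRingEnd ℂ))
    (lam : ℂ) (Ψ : ℝ → Fin m → ℂ) (hΨ : ContDiff ℝ n Ψ)
    (heq : ∀ x : ℝ, (I ^ n) • iteratedDeriv n Ψ x + P x *ᵥ Ψ x = lam • Ψ x) :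
    ∀ x : ℝ, (I ^ n) • iteratedDeriv n (fun y => fun i => (starRingEnd ℂ) (Ψ (-y) i)) x
      + P x *ᵥ (fun i => (starRingEnd ℂ) (Ψ (-x) i))
      = (starRingEnd ℂ) lam • (fun i => (starRingEnd ℂ) (Ψ (-x) i)) := by
  intro x
  have hd : iteratedDeriv n (fun y => fun i => (starRingEnd ℂ) (Ψ (-y) i)) x
      = (-1 : ℝ) ^ n • conjCLM m (iteratedDeriv n Ψ (-x)) := by
    have h1 := iteratedDeriv_comp_neg n (fun z => conjCLM m (Ψ z)) x
    have h2 : (fun y => fun i => (starRingEnd ℂ) (Ψ (-y) i))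
        = fun y => (fun z => conjCLM m (Ψ z)) (-y) := rfl
    rw [h2, h1, iteratedDeriv_clm m n Ψ hΨ]
  have h0 := heq (-x)
  funext i
  have hc := congrFun h0 i
  simp only [Pi.add_apply, Pi.smul_apply, smul_eq_mul, mulVec, dotProduct] at hc
  have hP : ∀ j, P x i j = (starRingEnd ℂ) (P (-x) i j) := by
    intro j
    have h3 := hPT (-x)
    rw [neg_neg] at h3
    rw [h3]; simp [Matrix.map_apply]
  simp only [Pi.add_apply, Pi.smul_apply, smul_eq_mul, mulVec, dotProduct, hd, conjCLM_apply]
  have key : I ^ n * (((-1:ℝ) ^ n • conjCLM m (iteratedDeriv n Ψ (-x))) i)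
      = (starRingEnd ℂ) (I ^ n * iteratedDeriv n Ψ (-x) i) := by
    rw [show (((-1:ℝ) ^ n • conjCLM m (iteratedDeriv n Ψ (-x))) i)
        = ((-1:ℝ) ^ n : ℝ) • (starRingEnd ℂ) (iteratedDeriv n Ψ (-x) i) from rfl,
      Complex.real_smul, _root_.map_mul, map_pow, Complex.conj_I]
    push_cast
    rw [neg_pow I]
    ring
  calc I ^ n * (((-1:ℝ) ^ n • conjCLM m (iteratedDeriv n Ψ (-x))) i)
        + ∑ j, P x i j * (starRingEnd ℂ) (Ψ (-x) j)
      = (starRingEnd ℂ) (I ^ n * iteratedDeriv n Ψ (-x) i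
          + ∑ j, P (-x) i j * Ψ (-x) j) := by
        rw [map_add, key, map_sum]
        congr 1
        refine Finset.sum_congr rfl fun j _ => ?_
        rw [_root_.map_mul, ← hP j]
    _ = (starRingEnd ℂ) (lam * Ψ (-x) i) := by rw [hc]
    _ = (starRingEnd ℂ) lam * (starRingEnd ℂ) (Ψ (-x) i) := _root_.map_mul _ _ _
end

section
/- Let q : ℝ → ℂ be continuous, 1-periodic, and PT-symmetric (q(-x) = conj(q(x))). Then for every λ ∈ ℝ, the equation i y' + q y = λ y has a nonzero bounded solution on ℝ that is not square-integrable on (0, ∞) and not square-integrable on (-∞, 0); consequently ℝ is contained in the spectrum of the operator y ↦ i y' + q y on L²(ℝ) in the sense that no real λ admits a decomposition of the 1-dimensional solution space into nontrivial L²(0,∞) and L²(-∞,0) parts. -/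
open Complex MeasureTheory Set

theorem stmt_18 (q : ℝ → ℂ) (hq : Continuous q)
    (hper : ∀ x : ℝ, q (x + 1) = q x)
    (hPT : ∀ x : ℝ, q (-x) = (starRingEnd ℂ) (q x)) :
    ∀ lam : ℝ, ∃ Ψ : ℝ → ℂ, Differentiable ℝ Ψ ∧
      (∀ x : ℝ, I * deriv Ψ x + q x * Ψ x = (lam : ℂ) * Ψ x) ∧
      Ψ ≠ 0 ∧
      (∃ C : ℝ, ∀ x : ℝ, ‖Ψ x‖ ≤ C) ∧
      ¬ IntegrableOn (fun x => ‖Ψ x‖ ^ 2) (Ioi 0) ∧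
      ¬ IntegrableOn (fun x => ‖Ψ x‖ ^ 2) (Iio 0) := by
  intro lam
  set f : ℝ → ℝ := fun x => (q x).im with hf
  have hfc : Continuous f := Complex.continuous_im.comp hq
  have hfodd : ∀ x, f (-x) = - f x := by intro x; simp [hf, hPT x]
  have hfper : Function.Periodic f 1 := fun x => by simp [hf, hper x]
  have hint : ∀ a b : ℝ, IntervalIntegrable f volume a b := fun a b => hfc.intervalIntegrable a b
  have h0 : (∫ t in (0:ℝ)..1, f t) = 0 := by
    have := hfper.intervalIntegral_add_eq 0 (-(1/2 : ℝ))
    rw [zero_add] at this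
    norm_num at this
    rw [this]
    have h1 : (∫ t in (-(1/2):ℝ)..0, f t) = ∫ t in (0:ℝ)..(1/2:ℝ), f (-t) := by
      rw [intervalIntegral.integral_comp_neg f]; norm_num
    have := intervalIntegral.integral_add_adjacent_intervals (hint (-(1/2)) 0) (hint 0 (1/2))
    rw [← this, h1]
    simp [hfodd]
  set F : ℝ → ℝ := fun x => ∫ t in (0:ℝ)..x, f t with hF
  have hFper : Function.Periodic F 1 := by
    intro x
    have := intervalIntegral.integral_add_adjacent_intervals (hint 0 x) (hint x (x+1))
    have h2 : (∫ t in x..(x+1), f t) = ∫ t in (0:ℝ)..(0+1), f t :=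
      hfper.intervalIntegral_add_eq x 0
    rw [zero_add] at h2
    simp only [hF]
    rw [← this, h2, h0, add_zero]
  have hFcont : Continuous F := by
    have : Differentiable ℝ F := fun x =>
      ((hfc.integral_hasStrictDerivAt 0 x).hasDerivAt).differentiableAt
    exact this.continuous
  -- bound on F
  obtain ⟨M, hM⟩ : ∃ M : ℝ, ∀ x, |F x| ≤ M := by
    obtain ⟨M, hM⟩ := (isCompact_Icc (a := (0:ℝ)) (b := 1)).exists_bound_of_continuousOn
      (hFcont.abs.continuousOn)
    refine ⟨M, fun x => ?_⟩
    have hfr : F x = F (Int.fract x) := by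
      have := hFper.sub_zsmul_eq (x := x) ⌊x⌋
      rw [zsmul_eq_mul, mul_one] at this
      rw [← this]; rfl
    rw [hfr]
    have hmem : Int.fract x ∈ Icc (0:ℝ) 1 :=
      ⟨Int.fract_nonneg x, le_of_lt (Int.fract_lt_one x)⟩
    simpa using hM _ hmem
  -- define Ψ
  set g : ℝ → ℂ := fun x => q x - lam with hg
  have hgc : Continuous g := hq.sub continuous_const
  set G : ℝ → ℂ := fun x => ∫ t in (0:ℝ)..x, g t with hG
  set Ψ : ℝ → ℂ := fun x => Complex.exp (I * G x) with hΨ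
  have hderiv : ∀ x, HasDerivAt Ψ (Ψ x * (I * g x)) x := by
    intro x
    have h1 : HasDerivAt G (g x) x := (hgc.integral_hasStrictDerivAt 0 x).hasDerivAt
    have h2 : HasDerivAt (fun u => I * G u) (I * g x) x := h1.const_mul I
    exact h2.cexp
  have hdiff : Differentiable ℝ Ψ := fun x => (hderiv x).differentiableAt
  -- modulus of Ψ
  have habs : ∀ x, ‖Ψ x‖ = Real.exp (-(F x)) := by
    intro x
    have him : (G x).im = F x := by
      have h := ContinuousLinearMap.intervalIntegral_comp_comm (𝕜 := ℝ) (μ := volume)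
        Complex.imCLM (hgc.intervalIntegrable 0 x)
      simp only [Complex.imCLM_apply] at h
      simp only [hG, hF]
      rw [← h]
      congr 1
      ext t
      simp [hg, hf]
    rw [hΨ]
    simp only [Complex.norm_exp]
    congr 1
    simp [Complex.mul_re, him]
  have hlow : ∀ x, Real.exp (-M) ≤ ‖Ψ x‖ := by
    intro x
    rw [habs x]
    exact Real.exp_le_exp.2 (by have := (abs_le.1 (hM x)).2; linarith)
  have hhigh : ∀ x, ‖Ψ x‖ ≤ Real.exp M := by
    intro x
    rw [habs x]
    exact Real.exp_le_exp.2 (by have := (abs_le.1 (hM x)).1; linarith)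
  -- non-integrability helper
  have key : ∀ s : Set ℝ, volume s = ⊤ →
      ¬ IntegrableOn (fun x => ‖Ψ x‖ ^ 2) s := by
    intro s hs hInt
    have hc : (0:ℝ) < Real.exp (-M) ^ 2 := pow_pos (Real.exp_pos _) 2
    have : Integrable (fun _ : ℝ => Real.exp (-M) ^ 2) (volume.restrict s) := by
      refine hInt.mono' aestronglyMeasurable_const ?_
      filter_upwards with x
      rw [Real.norm_eq_abs, abs_of_pos hc]
      exact pow_le_pow_left₀ (le_of_lt (Real.exp_pos _)) (hlow x) 2
    rw [integrable_const_iff] at this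
    rcases this with h | h
    · exact absurd h (ne_of_gt hc)
    · rw [isFiniteMeasure_restrict, hs] at h
      exact absurd h (by simp)
  refine ⟨Ψ, hdiff, ?_, ?_, ⟨Real.exp M, hhigh⟩, key _ (by simp), key _ (by simp)⟩
  · intro x
    rw [(hderiv x).deriv]
    simp only [hg]
    ring_nf
    rw [Complex.I_sq]
    ring
  · intro h
    have : Ψ 0 = 0 := congrFun h 0
    exact Complex.exp_ne_zero _ this
end
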